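/- Let A(ξ,λ) = Σ_{j=2μ}^{2m} λ^{2m−j} A_j(ξ) be N-elliptic with parameter in [0,∞). Then for every λ₀ > 0 there exists a constant C = C(λ₀) > 0, independent of u and λ, such that for all λ ≥ λ₀ and all Schwartz functions u on ℝⁿ: ∫_{ℝⁿ} (1+|ξ|²)^μ (λ²+|ξ|²)^{m−μ} |Fu(ξ)|² dξ ≤ C ( ∫_{ℝⁿ} (1+|ξ|²)^{−μ} (λ²+|ξ|²)^{−(m−μ)} |A(ξ,λ)|² |Fu(ξ)|² dξ + λ^{2m−2μ} ∫_{ℝⁿ} |u(x)|² dx ). -/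

import Mathlib

open MeasureTheory Finset

noncomputable section

/-- `A : ℝⁿ → ℂ` is a (complex-valued) polynomial map, homogeneous of degree `j`
(under positive scaling). -/
def IsHomogPoly (n j : ℕ) (A : EuclideanSpace ℝ (Fin n) → ℂ) : Prop :=
  (∃ p : MvPolynomial (Fin n) ℂ, ∀ ξ, A ξ = MvPolynomial.eval (fun i => (ξ i : ℂ)) p) ∧
    ∀ t : ℝ, 0 < t → ∀ ξ, A (t • ξ) = (t : ℂ) ^ j * A ξ

/-- The operator pencil `A(ξ,λ) = Σ_{j=2μ}^{2m} λ^{2m−j} A_j(ξ)`. -/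
def pencil {n : ℕ} (m μ : ℕ) (A : ℕ → EuclideanSpace ℝ (Fin n) → ℂ)
    (ξ : EuclideanSpace ℝ (Fin n)) (lam : ℝ) : ℂ :=
  ∑ j ∈ Finset.Icc (2 * μ) (2 * m), (lam : ℂ) ^ (2 * m - j) * A j ξ

/-- `N`-ellipticity with parameter in `[0,∞)`. -/
def NElliptic {n : ℕ} (m μ : ℕ) (A : ℕ → EuclideanSpace ℝ (Fin n) → ℂ) : Prop :=
  ∃ C > (0 : ℝ), ∀ (ξ : EuclideanSpace ℝ (Fin n)) (lam : ℝ), 0 ≤ lam →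
    C * ‖ξ‖ ^ (2 * μ) * (lam + ‖ξ‖) ^ (2 * m - 2 * μ) ≤ ‖pencil m μ A ξ lam‖

/-- The Fourier transform `Fu(ξ) = (2π)^{-n/2} ∫ e^{-i x·ξ} u(x) dx`. -/
def myFourier {n : ℕ} (u : EuclideanSpace ℝ (Fin n) → ℂ) (ξ : EuclideanSpace ℝ (Fin n)) : ℂ :=
  ((2 * Real.pi) ^ (-(n : ℝ) / 2) : ℝ) *
    ∫ x : EuclideanSpace ℝ (Fin n), Complex.exp (-Complex.I * ((inner ℝ x ξ : ℝ) : ℂ)) * u x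

/-! By Plancherel, `∫ |Fu|² = ∫ |u|²`, so it suffices to bound the weight
`w(ξ) = (1 + |ξ|²)^μ (λ² + |ξ|²)^(m-μ)` pointwise. Where `|ξ| ≥ 1`,
`w ≤ 2^μ |ξ|^(2μ) (λ + |ξ|)^(2m-2μ)`, which by `N`-ellipticity is at most `(2^μ / C) |A(ξ,λ)|`,
hence `w ≤ (2^μ / C)² |A(ξ,λ)|² / w`. Where `|ξ| ≤ 1`, `w ≤ 2^μ (1 + λ₀⁻²)^(m-μ) λ^(2m-2μ)` because
`λ ≥ λ₀`. Integrating against `|Fu|²` gives the estimate. Polynomial growth of the `A_j` is needed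
only to make the integrands integrable (`Fu` is a Schwartz function): a Bochner integral of a
non-integrable function is `0`. -/

open FourierTransform SchwartzMap

section Fourier

variable {n : ℕ}

lemma myFourier_eq (u : EuclideanSpace ℝ (Fin n) → ℂ) (ξ : EuclideanSpace ℝ (Fin n)) :
    myFourier u ξ = ((2 * Real.pi) ^ (-(n : ℝ) / 2) : ℝ) * 𝓕 u ((2 * Real.pi)⁻¹ • ξ) := by
  rw [myFourier, Real.fourier_eq']
  congr 2 with x
  rw [smul_eq_mul, real_inner_smul_right]
  congr 2
  push_cast
  field_simp

lemma exists_schwartzMap_coe_eq_myFourier (u : 𝓢(EuclideanSpace ℝ (Fin n), ℂ)) :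
    ∃ G : 𝓢(EuclideanSpace ℝ (Fin n), ℂ), ⇑G = myFourier ⇑u := by
  have h2π : (2 * Real.pi)⁻¹ ≠ 0 := by positivity
  refine ⟨(((2 * Real.pi) ^ (-(n : ℝ) / 2) : ℝ) : ℂ) • compCLMOfContinuousLinearEquiv ℂ
    (ContinuousLinearEquiv.smulLeft (Units.mk0 _ h2π)) (𝓕 u), ?_⟩
  ext ξ
  simp only [smul_apply, compCLMOfContinuousLinearEquiv_apply, Function.comp_apply,
    ContinuousLinearEquiv.smulLeft_apply_apply, Units.smul_def, Units.val_mk0, fourier_coe,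
    myFourier_eq, smul_eq_mul]

lemma integral_norm_sq_myFourier (u : 𝓢(EuclideanSpace ℝ (Fin n), ℂ)) :
    ∫ ξ, ‖myFourier (⇑u) ξ‖ ^ 2 = ∫ x, ‖u x‖ ^ 2 := by
  have hc : ((2 * Real.pi) ^ (-(n : ℝ) / 2)) ^ 2 * (2 * Real.pi) ^ n = 1 := by
    rw [← Real.rpow_natCast, ← Real.rpow_mul (by positivity), ← Real.rpow_natCast,
      ← Real.rpow_add (by positivity)]
    simp
  simp_rw [myFourier_eq, norm_mul, mul_pow, Complex.norm_real, Real.norm_eq_abs, sq_abs]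
  rw [integral_const_mul, Measure.integral_comp_inv_smul_of_nonneg volume
    (fun η => ‖𝓕 (⇑u) η‖ ^ 2) (by positivity), finrank_euclideanSpace_fin, smul_eq_mul,
    ← mul_assoc, hc, one_mul, ← fourier_coe, integral_norm_sq_fourier]

end Fourier

section PolynomialGrowth

variable {E F : Type*} [NormedAddCommGroup E]

def IsPolynomiallyBounded [Norm F] (f : E → F) : Prop :=
  ∃ C : ℝ, ∃ k : ℕ, ∀ x, ‖f x‖ ≤ C * (1 + ‖x‖) ^ k

namespace IsPolynomiallyBounded

lemma of_norm_le [Norm F] {f : E → F} {C : ℝ} (h : ∀ x, ‖f x‖ ≤ C) : IsPolynomiallyBounded f :=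
  ⟨C, 0, by simpa using h⟩

lemma const [SeminormedAddCommGroup F] (c : F) : IsPolynomiallyBounded fun _ : E => c :=
  of_norm_le fun _ => le_rfl

lemma _root_.isPolynomiallyBounded_id : IsPolynomiallyBounded (id : E → E) :=
  ⟨1, 1, fun x => by simp⟩

lemma norm_le_of_exponent_le [SeminormedAddCommGroup F] {f : E → F} {C : ℝ} {k l : ℕ}
    (hf : ∀ x, ‖f x‖ ≤ C * (1 + ‖x‖) ^ k) (hkl : k ≤ l) (x : E) :
    ‖f x‖ ≤ C * (1 + ‖x‖) ^ l := by
  have hC : 0 ≤ C := by simpa using (norm_nonneg _).trans (hf 0)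
  exact (hf x).trans (by gcongr; · simp)

lemma norm [SeminormedAddCommGroup F] {f : E → F} (hf : IsPolynomiallyBounded f) :
    IsPolynomiallyBounded fun x => ‖f x‖ := by
  simpa [IsPolynomiallyBounded] using hf

variable [SeminormedRing F] {f g : E → F}

lemma add (hf : IsPolynomiallyBounded f) (hg : IsPolynomiallyBounded g) :
    IsPolynomiallyBounded fun x => f x + g x := by
  obtain ⟨C, k, hC⟩ := hf
  obtain ⟨D, l, hD⟩ := hg
  refine ⟨C + D, max k l, fun x => ?_⟩
  calc ‖f x + g x‖ ≤ ‖f x‖ + ‖g x‖ := norm_add_le _ _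
    _ ≤ C * (1 + ‖x‖) ^ max k l + D * (1 + ‖x‖) ^ max k l :=
      add_le_add (norm_le_of_exponent_le hC (le_max_left k l) x)
        (norm_le_of_exponent_le hD (le_max_right k l) x)
    _ = (C + D) * (1 + ‖x‖) ^ max k l := by ring

lemma mul (hf : IsPolynomiallyBounded f) (hg : IsPolynomiallyBounded g) :
    IsPolynomiallyBounded fun x => f x * g x := by
  obtain ⟨C, k, hC⟩ := hf
  obtain ⟨D, l, hD⟩ := hg
  refine ⟨C * D, k + l, fun x => ?_⟩
  calc ‖f x * g x‖ ≤ ‖f x‖ * ‖g x‖ := norm_mul_le _ _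
    _ ≤ C * (1 + ‖x‖) ^ k * (D * (1 + ‖x‖) ^ l) :=
      mul_le_mul (hC x) (hD x) (norm_nonneg _) ((norm_nonneg _).trans (hC x))
    _ = C * D * (1 + ‖x‖) ^ (k + l) := by ring

lemma pow (hf : IsPolynomiallyBounded f) (j : ℕ) : IsPolynomiallyBounded fun x => f x ^ j := by
  induction j with
  | zero => simpa using const (E := E) (1 : F)
  | succ j ih => simpa only [pow_succ] using ih.mul hf

lemma finsetSum {ι : Type*} {f : ι → E → F} (s : Finset ι)
    (hf : ∀ i ∈ s, IsPolynomiallyBounded (f i)) :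
    IsPolynomiallyBounded fun x => ∑ i ∈ s, f i x := by
  classical
  induction s using Finset.induction_on with
  | empty => simpa using const (E := E) (0 : F)
  | insert a s ha ih =>
    simp_rw [Finset.sum_insert ha]
    exact (hf a (mem_insert_self a s)).add (ih fun i hi => hf i (mem_insert_of_mem hi))

end IsPolynomiallyBounded

lemma isPolynomiallyBounded_mvPolynomial_eval {ι : Type*} [Fintype ι]
    (p : MvPolynomial ι ℂ) :
    IsPolynomiallyBounded fun ξ : EuclideanSpace ℝ ι =>
      MvPolynomial.eval (fun i => (ξ i : ℂ)) p := by
  induction p using MvPolynomial.induction_on with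
  | C a => simpa using IsPolynomiallyBounded.const (E := EuclideanSpace ℝ ι) a
  | add p q hp hq => simpa only [map_add] using hp.add hq
  | mul_X p i hp =>
    have hX : IsPolynomiallyBounded fun ξ : EuclideanSpace ℝ ι => (ξ i : ℂ) :=
      ⟨1, 1, fun ξ => by
        simpa using (PiLp.norm_apply_le ξ i).trans (le_add_of_nonneg_left zero_le_one)⟩
    simpa only [map_mul, MvPolynomial.eval_X] using hp.mul hX

lemma isPolynomiallyBounded_weight (m μ : ℕ) (lam : ℝ) :
    IsPolynomiallyBounded fun ξ : E => (1 + ‖ξ‖ ^ 2) ^ μ * (lam ^ 2 + ‖ξ‖ ^ 2) ^ (m - μ) :=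
  have hsq (c : ℝ) : IsPolynomiallyBounded fun ξ : E => c + ‖ξ‖ ^ 2 :=
    (IsPolynomiallyBounded.const c).add (isPolynomiallyBounded_id.norm.pow 2)
  ((hsq 1).pow μ).mul ((hsq _).pow (m - μ))

end PolynomialGrowth

section Integrability

variable {D V : Type*} [NormedAddCommGroup D] [NormedSpace ℝ D] [MeasurableSpace D]
  [BorelSpace D] [SecondCountableTopology D] [NormedAddCommGroup V] [NormedSpace ℝ V]
  {ν : Measure D} [ν.HasTemperateGrowth]

lemma SchwartzMap.integrable_one_add_norm_pow_mul (f : 𝓢(D, V)) (k : ℕ) :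
    Integrable (fun x => (1 + ‖x‖) ^ k * ‖f x‖) ν := by
  have hbinom : (fun x => (1 + ‖x‖) ^ k * ‖f x‖) =
      fun x => ∑ i ∈ range (k + 1), ‖x‖ ^ i * ‖f x‖ * k.choose i := by
    ext x
    simp only [add_comm 1 ‖x‖, add_pow, one_pow, mul_one, Finset.sum_mul, mul_right_comm]
  rw [hbinom]
  exact integrable_finsetSum _ fun i _ => (f.integrable_pow_mul ν i).mul_const _

lemma SchwartzMap.integrable_mul_norm_sq (f : 𝓢(D, V)) {g : D → ℝ} (hg : Continuous g)
    (hgb : IsPolynomiallyBounded g) : Integrable (fun x => g x * ‖f x‖ ^ 2) ν := by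
  obtain ⟨C, k, hC⟩ := hgb
  set M := SchwartzMap.seminorm ℝ 0 0 f
  refine ((f.integrable_one_add_norm_pow_mul k).mul_const (C * M)).mono' (by fun_prop)
    (Filter.Eventually.of_forall fun x => ?_)
  calc ‖g x * ‖f x‖ ^ 2‖ = ‖g x‖ * ‖f x‖ * ‖f x‖ := by simp [pow_two, mul_assoc]
    _ ≤ C * (1 + ‖x‖) ^ k * ‖f x‖ * M := by
      have := (norm_nonneg _).trans (hC x)
      gcongr
      · exact hC x
      · exact f.norm_le_seminorm ℝ x
    _ = (1 + ‖x‖) ^ k * ‖f x‖ * (C * M) := by ring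

end Integrability

section Pencil

variable {n : ℕ}

lemma IsHomogPoly.continuous {j : ℕ} {f : EuclideanSpace ℝ (Fin n) → ℂ}
    (hf : IsHomogPoly n j f) : Continuous f := by
  obtain ⟨p, hp⟩ := hf.1
  rw [funext hp]
  exact (MvPolynomial.continuous_eval p).comp (by fun_prop)

lemma IsHomogPoly.isPolynomiallyBounded {j : ℕ} {f : EuclideanSpace ℝ (Fin n) → ℂ}
    (hf : IsHomogPoly n j f) : IsPolynomiallyBounded f := by
  obtain ⟨p, hp⟩ := hf.1
  rw [funext hp]
  exact isPolynomiallyBounded_mvPolynomial_eval p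

variable {m μ : ℕ} {A : ℕ → EuclideanSpace ℝ (Fin n) → ℂ}

lemma continuous_pencil (hA : ∀ j ∈ Finset.Icc (2 * μ) (2 * m), Continuous (A j)) (lam : ℝ) :
    Continuous fun ξ => pencil m μ A ξ lam :=
  continuous_finsetSum _ fun j hj => continuous_const.mul (hA j hj)

lemma isPolynomiallyBounded_pencil
    (hA : ∀ j ∈ Finset.Icc (2 * μ) (2 * m), IsPolynomiallyBounded (A j)) (lam : ℝ) :
    IsPolynomiallyBounded fun ξ => pencil m μ A ξ lam :=
  IsPolynomiallyBounded.finsetSum _ fun j hj => (IsPolynomiallyBounded.const _).mul (hA j hj)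

end Pencil

section Weight

variable {m μ : ℕ} {r lam : ℝ}

lemma weight_le_of_one_le (hr : 1 ≤ r) (hlam : 0 ≤ lam) :
    (1 + r ^ 2) ^ μ * (lam ^ 2 + r ^ 2) ^ (m - μ)
      ≤ 2 ^ μ * (r ^ (2 * μ) * (lam + r) ^ (2 * m - 2 * μ)) := by
  calc (1 + r ^ 2) ^ μ * (lam ^ 2 + r ^ 2) ^ (m - μ)
      ≤ (2 * r ^ 2) ^ μ * ((lam + r) ^ 2) ^ (m - μ) := by
        gcongr <;> nlinarith
    _ = 2 ^ μ * (r ^ (2 * μ) * (lam + r) ^ (2 * m - 2 * μ)) := by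
        rw [mul_pow, ← pow_mul, ← pow_mul, show 2 * (m - μ) = 2 * m - 2 * μ by omega]
        ring

lemma weight_le_of_le_one {lam0 : ℝ} (hr0 : 0 ≤ r) (hr : r ≤ 1) (hlam0 : 0 < lam0)
    (hlam : lam0 ≤ lam) :
    (1 + r ^ 2) ^ μ * (lam ^ 2 + r ^ 2) ^ (m - μ)
      ≤ 2 ^ μ * (1 + lam0⁻¹ ^ 2) ^ (m - μ) * lam ^ (2 * m - 2 * μ) := by
  have hlam' : 1 ≤ lam0⁻¹ ^ 2 * lam ^ 2 := by
    rw [← mul_pow]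
    exact one_le_pow₀ ((le_inv_mul_iff₀ hlam0).mpr (by simpa using hlam))
  calc (1 + r ^ 2) ^ μ * (lam ^ 2 + r ^ 2) ^ (m - μ)
      ≤ 2 ^ μ * ((1 + lam0⁻¹ ^ 2) * lam ^ 2) ^ (m - μ) := by
        gcongr <;> nlinarith
    _ = 2 ^ μ * (1 + lam0⁻¹ ^ 2) ^ (m - μ) * lam ^ (2 * m - 2 * μ) := by
        rw [mul_pow, ← pow_mul, show 2 * (m - μ) = 2 * m - 2 * μ by omega]
        ring

lemma weight_le {Ce P lam0 : ℝ} (hCe : 0 < Ce) (hr : 0 ≤ r) (hlam0 : 0 < lam0)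
    (hlam : lam0 ≤ lam) (hP : Ce * r ^ (2 * μ) * (lam + r) ^ (2 * m - 2 * μ) ≤ P) :
    (1 + r ^ 2) ^ μ * (lam ^ 2 + r ^ 2) ^ (m - μ)
      ≤ (2 ^ μ / Ce) ^ 2 * P ^ 2 / ((1 + r ^ 2) ^ μ * (lam ^ 2 + r ^ 2) ^ (m - μ))
        + 2 ^ μ * (1 + lam0⁻¹ ^ 2) ^ (m - μ) * lam ^ (2 * m - 2 * μ) := by
  have hlam_pos : 0 < lam := hlam0.trans_le hlam
  set w := (1 + r ^ 2) ^ μ * (lam ^ 2 + r ^ 2) ^ (m - μ)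
  have hw : 0 < w := by positivity
  rcases le_total 1 r with hr1 | hr1
  · have hwP : w ≤ 2 ^ μ / Ce * P := by
      refine (weight_le_of_one_le hr1 hlam_pos.le).trans ?_
      rw [div_mul_eq_mul_div, le_div_iff₀ hCe]
      nlinarith [pow_pos (two_pos (α := ℝ)) μ]
    have : w ≤ (2 ^ μ / Ce) ^ 2 * P ^ 2 / w := by
      rw [le_div_iff₀ hw, ← mul_pow, sq]
      exact mul_le_mul hwP hwP hw.le (hw.le.trans hwP)
    linarith [show 0 ≤ 2 ^ μ * (1 + lam0⁻¹ ^ 2) ^ (m - μ) * lam ^ (2 * m - 2 * μ) by positivity]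
  · have := weight_le_of_le_one (m := m) (μ := μ) hr hr1 hlam0 hlam
    linarith [show 0 ≤ (2 ^ μ / Ce) ^ 2 * P ^ 2 / w by positivity]

end Weight

section Estimate

variable {D : Type*} [NormedAddCommGroup D] [NormedSpace ℝ D] [MeasurableSpace D]
  [BorelSpace D] [SecondCountableTopology D] {ν : Measure D} [ν.HasTemperateGrowth]
  {m μ : ℕ}

lemma integrable_weight_mul_norm_sq (G : 𝓢(D, ℂ)) (lam : ℝ) :
    Integrable (fun ξ => (1 + ‖ξ‖ ^ 2) ^ μ * (lam ^ 2 + ‖ξ‖ ^ 2) ^ (m - μ) * ‖G ξ‖ ^ 2) ν :=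
  G.integrable_mul_norm_sq (by fun_prop) (isPolynomiallyBounded_weight m μ lam)

lemma integrable_mul_norm_sq_div_weight (G : 𝓢(D, ℂ)) {P : D → ℂ} (hPc : Continuous P)
    (hPb : IsPolynomiallyBounded P) {lam : ℝ} (hlam : 0 < lam) :
    Integrable (fun ξ => ‖P ξ‖ ^ 2 * ‖G ξ‖ ^ 2
      / ((1 + ‖ξ‖ ^ 2) ^ μ * (lam ^ 2 + ‖ξ‖ ^ 2) ^ (m - μ))) ν := by
  have hw (ξ : D) : (lam ^ 2) ^ (m - μ) ≤ (1 + ‖ξ‖ ^ 2) ^ μ * (lam ^ 2 + ‖ξ‖ ^ 2) ^ (m - μ) :=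
    calc (lam ^ 2) ^ (m - μ) ≤ (lam ^ 2 + ‖ξ‖ ^ 2) ^ (m - μ) := by gcongr; simp
      _ ≤ _ := le_mul_of_one_le_left (by positivity) (one_le_pow₀ (by simp))
  have hinv : IsPolynomiallyBounded
      fun ξ : D => ((1 + ‖ξ‖ ^ 2) ^ μ * (lam ^ 2 + ‖ξ‖ ^ 2) ^ (m - μ))⁻¹ :=
    .of_norm_le fun ξ => by
      rw [norm_inv, Real.norm_of_nonneg (by positivity)]
      exact inv_anti₀ (by positivity) (hw ξ)
  simp_rw [mul_div_right_comm _ (‖G _‖ ^ 2), div_eq_mul_inv]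
  exact G.integrable_mul_norm_sq
    ((hPc.norm.pow 2).mul ((by fun_prop : Continuous _).inv₀ fun ξ => by positivity))
    ((hPb.norm.pow 2).mul hinv)

end Estimate

theorem integral_weight_mul_norm_sq_myFourier_le {n m μ : ℕ}
    {A : ℕ → EuclideanSpace ℝ (Fin n) → ℂ}
    (hAc : ∀ j ∈ Finset.Icc (2 * μ) (2 * m), Continuous (A j))
    (hAb : ∀ j ∈ Finset.Icc (2 * μ) (2 * m), IsPolynomiallyBounded (A j)) {Ce : ℝ} (hCe : 0 < Ce)
    (hell : ∀ (ξ : EuclideanSpace ℝ (Fin n)) (lam : ℝ), 0 ≤ lam →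
      Ce * ‖ξ‖ ^ (2 * μ) * (lam + ‖ξ‖) ^ (2 * m - 2 * μ) ≤ ‖pencil m μ A ξ lam‖)
    {lam0 lam : ℝ} (hlam0 : 0 < lam0) (hlam : lam0 ≤ lam)
    (u : 𝓢(EuclideanSpace ℝ (Fin n), ℂ)) :
    ∫ ξ, (1 + ‖ξ‖ ^ 2) ^ μ * (lam ^ 2 + ‖ξ‖ ^ 2) ^ (m - μ) * ‖myFourier (⇑u) ξ‖ ^ 2
      ≤ (2 ^ μ / Ce) ^ 2 * (∫ ξ, ‖pencil m μ A ξ lam‖ ^ 2 * ‖myFourier (⇑u) ξ‖ ^ 2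
          / ((1 + ‖ξ‖ ^ 2) ^ μ * (lam ^ 2 + ‖ξ‖ ^ 2) ^ (m - μ)))
        + 2 ^ μ * (1 + lam0⁻¹ ^ 2) ^ (m - μ) * lam ^ (2 * m - 2 * μ) * ∫ x, ‖u x‖ ^ 2 := by
  have hlam_pos : 0 < lam := hlam0.trans_le hlam
  obtain ⟨G, hG⟩ := exists_schwartzMap_coe_eq_myFourier u
  have hPG := integrable_mul_norm_sq_div_weight (ν := volume) (m := m) (μ := μ) G
    (continuous_pencil hAc lam) (isPolynomiallyBounded_pencil hAb lam) hlam_pos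
  have hG2 : Integrable (fun ξ => ‖G ξ‖ ^ 2) := (G.memLp 2).integrable_norm_pow two_ne_zero
  rw [← integral_norm_sq_myFourier u, ← hG, ← integral_const_mul, ← integral_const_mul,
    ← integral_add (hPG.const_mul _) (hG2.const_mul _)]
  refine integral_mono (integrable_weight_mul_norm_sq G lam)
    ((hPG.const_mul _).add (hG2.const_mul _)) fun ξ => ?_
  have hw := weight_le hCe (norm_nonneg ξ) hlam0 hlam (hell ξ lam hlam_pos.le)
  calc _ ≤ ((2 ^ μ / Ce) ^ 2 * ‖pencil m μ A ξ lam‖ ^ 2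
          / ((1 + ‖ξ‖ ^ 2) ^ μ * (lam ^ 2 + ‖ξ‖ ^ 2) ^ (m - μ))
        + 2 ^ μ * (1 + lam0⁻¹ ^ 2) ^ (m - μ) * lam ^ (2 * m - 2 * μ)) * ‖G ξ‖ ^ 2 := by
        gcongr
    _ = _ := by ring

theorem statement15_general (n m μ : ℕ)
    (A : ℕ → EuclideanSpace ℝ (Fin n) → ℂ)
    (hA : ∀ j ∈ Finset.Icc (2 * μ) (2 * m), IsHomogPoly n j (A j))
    (hell : NElliptic m μ A) :
    ∀ lam0 : ℝ, 0 < lam0 → ∃ C > (0 : ℝ), ∀ lam : ℝ, lam0 ≤ lam →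
      ∀ u : SchwartzMap (EuclideanSpace ℝ (Fin n)) ℂ,
        (∫ ξ : EuclideanSpace ℝ (Fin n),
            (1 + ‖ξ‖ ^ 2) ^ μ * (lam ^ 2 + ‖ξ‖ ^ 2) ^ (m - μ) * ‖myFourier (⇑u) ξ‖ ^ 2)
          ≤ C * ((∫ ξ : EuclideanSpace ℝ (Fin n),
                ‖pencil m μ A ξ lam‖ ^ 2 * ‖myFourier (⇑u) ξ‖ ^ 2
                  / ((1 + ‖ξ‖ ^ 2) ^ μ * (lam ^ 2 + ‖ξ‖ ^ 2) ^ (m - μ)))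
              + lam ^ (2 * m - 2 * μ) * ∫ x : EuclideanSpace ℝ (Fin n), ‖u x‖ ^ 2) := by
  obtain ⟨Ce, hCe, hell⟩ := hell
  intro lam0 hlam0
  set C₁ : ℝ := (2 ^ μ / Ce) ^ 2
  set C₂ : ℝ := 2 ^ μ * (1 + lam0⁻¹ ^ 2) ^ (m - μ)
  refine ⟨max C₁ C₂, lt_max_of_lt_right (by positivity), fun lam hlam u => ?_⟩
  have hI : 0 ≤ ∫ ξ, ‖pencil m μ A ξ lam‖ ^ 2 * ‖myFourier (⇑u) ξ‖ ^ 2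
      / ((1 + ‖ξ‖ ^ 2) ^ μ * (lam ^ 2 + ‖ξ‖ ^ 2) ^ (m - μ)) :=
    integral_nonneg fun ξ => by positivity
  have hU : 0 ≤ lam ^ (2 * m - 2 * μ) * ∫ x, ‖u x‖ ^ 2 :=
    mul_nonneg (pow_nonneg (hlam0.trans_le hlam).le _) (integral_nonneg fun x => by positivity)
  calc _ ≤ C₁ * _ + C₂ * lam ^ (2 * m - 2 * μ) * _ :=
        integral_weight_mul_norm_sq_myFourier_le (fun j hj => (hA j hj).continuous)
          (fun j hj => (hA j hj).isPolynomiallyBounded) hCe hell hlam0 hlam u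
    _ ≤ max C₁ C₂ * _ := by
        rw [mul_add, mul_assoc C₂]
        gcongr
        exacts [le_max_left _ _, le_max_right _ _]

/-- the a priori estimate in `ℝⁿ` for an `N`-elliptic pencil. -/
theorem statement15 (n m μ : ℕ) (hn : 1 ≤ n) (hμm : μ < m)
    (A : ℕ → EuclideanSpace ℝ (Fin n) → ℂ)
    (hA : ∀ j ∈ Finset.Icc (2 * μ) (2 * m), IsHomogPoly n j (A j))
    (hell : NElliptic m μ A) :
    ∀ lam0 : ℝ, 0 < lam0 → ∃ C > (0 : ℝ), ∀ lam : ℝ, lam0 ≤ lam →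
      ∀ u : SchwartzMap (EuclideanSpace ℝ (Fin n)) ℂ,
        (∫ ξ : EuclideanSpace ℝ (Fin n),
            (1 + ‖ξ‖ ^ 2) ^ μ * (lam ^ 2 + ‖ξ‖ ^ 2) ^ (m - μ) * ‖myFourier (⇑u) ξ‖ ^ 2)
          ≤ C * ((∫ ξ : EuclideanSpace ℝ (Fin n),
                ‖pencil m μ A ξ lam‖ ^ 2 * ‖myFourier (⇑u) ξ‖ ^ 2
                  / ((1 + ‖ξ‖ ^ 2) ^ μ * (lam ^ 2 + ‖ξ‖ ^ 2) ^ (m - μ)))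
              + lam ^ (2 * m - 2 * μ) * ∫ x : EuclideanSpace ℝ (Fin n), ‖u x‖ ^ 2) :=
  statement15_general n m μ A hA hell

end
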